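/- arXiv:1101.3031 — 3 statements merged into one kernel-verified Lean document; each statement's English description precedes it below -/
import Mathlib

section
/- Let f : ℝ² → ℝ be C², and let X = (X¹,X²), Y = (Y¹,Y²) be fixed unit vectors. Define u := f_X(1 + f_Y²) and v := f_Y(1 + f_X²), where f_X := ⟨∇f, X⟩, f_Y := ⟨∇f, Y⟩. Then f_{XX}(1 + f_Y²) − f_{YY}(1 + f_X²) equals the divergence of the vector field (uX¹ − vY¹, uX² − vY²). -/
/-!
The divergence of the field `u X - v Y` is `D_X u - D_Y v`. Expanding both by the product rule,
the mixed terms `2 f_X f_Y f_{YX}` and `2 f_Y f_X f_{XY}` cancel by the symmetry of the second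
derivative of the `C²` function `f`, which leaves `f_{XX} (1 + f_Y²) - f_{YY} (1 + f_X²)`.
-/

open ContinuousLinearMap

theorem ContinuousLinearMap.apply_eq_fst_mul_add_snd_mul (L : ℝ × ℝ →L[ℝ] ℝ) (x : ℝ × ℝ) :
    L x = x.1 * L (1, 0) + x.2 * L (0, 1) := by
  conv_lhs => rw [show x = x.1 • (1, 0) + x.2 • (0, 1) by ext <;> simp]
  rw [map_add, map_smul, map_smul, smul_eq_mul, smul_eq_mul]

noncomputable def divergence (W : ℝ × ℝ → ℝ × ℝ) (p : ℝ × ℝ) : ℝ :=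
  fderiv ℝ (fun q => (W q).1) p (1, 0) + fderiv ℝ (fun q => (W q).2) p (0, 1)

theorem divergence_smul_sub_smul {u v : ℝ × ℝ → ℝ} {p : ℝ × ℝ} (hu : DifferentiableAt ℝ u p)
    (hv : DifferentiableAt ℝ v p) (X Y : ℝ × ℝ) :
    divergence (fun q => u q • X - v q • Y) p = fderiv ℝ u p X - fderiv ℝ v p Y := by
  simp only [divergence, Prod.fst_sub, Prod.snd_sub, Prod.smul_fst, Prod.smul_snd, smul_eq_mul]
  rw [fderiv_fun_sub (hu.mul_const _) (hv.mul_const _),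
    fderiv_fun_sub (hu.mul_const _) (hv.mul_const _),
    fderiv_mul_const hu, fderiv_mul_const hu, fderiv_mul_const hv, fderiv_mul_const hv,
    (fderiv ℝ u p).apply_eq_fst_mul_add_snd_mul X, (fderiv ℝ v p).apply_eq_fst_mul_add_snd_mul Y]
  simp only [sub_apply, smul_apply, smul_eq_mul]
  ring

theorem fderiv_fderiv_apply_const {𝕜 E F : Type*} [NontriviallyNormedField 𝕜]
    [NormedAddCommGroup E] [NormedSpace 𝕜 E] [NormedAddCommGroup F] [NormedSpace 𝕜 F]
    {f : E → F} {p : E} (hf : DifferentiableAt 𝕜 (fderiv 𝕜 f) p) (v w : E) :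
    fderiv 𝕜 (fun q => fderiv 𝕜 f q v) p w = fderiv 𝕜 (fderiv 𝕜 f) p w v := by
  simp [fderiv_clm_apply hf (differentiableAt_const v)]

theorem fderiv_mul_one_add_sq_sub_of_cross_eq {E : Type*} [NormedAddCommGroup E]
    [NormedSpace ℝ E] {a b : E → ℝ} {p X Y : E} (ha : DifferentiableAt ℝ a p)
    (hb : DifferentiableAt ℝ b p) (hcross : fderiv ℝ b p X = fderiv ℝ a p Y) :
    fderiv ℝ (fun q => a q * (1 + b q ^ 2)) p X - fderiv ℝ (fun q => b q * (1 + a q ^ 2)) p Y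
      = fderiv ℝ a p X * (1 + b p ^ 2) - fderiv ℝ b p Y * (1 + a p ^ 2) := by
  rw [(ha.hasFDerivAt.fun_mul ((hb.hasFDerivAt.pow 2).const_add 1)).fderiv,
    (hb.hasFDerivAt.fun_mul ((ha.hasFDerivAt.pow 2).const_add 1)).fderiv]
  simp only [add_apply, smul_apply, smul_eq_mul, hcross]
  ring

theorem curvature_difference_eq_divergence_general
    (f : ℝ × ℝ → ℝ) (hf : ContDiff ℝ 2 f) (X Y : ℝ × ℝ) (p : ℝ × ℝ) :
    fderiv ℝ (fun q => fderiv ℝ f q X) p X * (1 + (fderiv ℝ f p Y) ^ 2)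
      - fderiv ℝ (fun q => fderiv ℝ f q Y) p Y * (1 + (fderiv ℝ f p X) ^ 2)
    = fderiv ℝ (fun q =>
          (fderiv ℝ f q X * (1 + (fderiv ℝ f q Y) ^ 2)) * X.1
            - (fderiv ℝ f q Y * (1 + (fderiv ℝ f q X) ^ 2)) * Y.1) p (1, 0)
      + fderiv ℝ (fun q =>
          (fderiv ℝ f q X * (1 + (fderiv ℝ f q Y) ^ 2)) * X.2
            - (fderiv ℝ f q Y * (1 + (fderiv ℝ f q X) ^ 2)) * Y.2) p (0, 1) := by
  have hDf : DifferentiableAt ℝ (fderiv ℝ f) p :=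
    (hf.fderiv_right (m := 1) le_rfl).differentiable one_ne_zero p
  have hfX := hDf.clm_apply (differentiableAt_const X)
  have hfY := hDf.clm_apply (differentiableAt_const Y)
  have hcross :
      fderiv ℝ (fun q => fderiv ℝ f q Y) p X = fderiv ℝ (fun q => fderiv ℝ f q X) p Y := by
    rw [fderiv_fderiv_apply_const hDf, fderiv_fderiv_apply_const hDf]
    exact (hf.contDiffAt.isSymmSndFDerivAt (by simp)).eq X Y
  rw [← fderiv_mul_one_add_sq_sub_of_cross_eq hfX hfY hcross]
  -- the right-hand side is `divergence (fun q => u q • X - v q • Y) p` unfolded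
  exact (divergence_smul_sub_smul (hfX.mul ((hfY.pow 2).const_add 1))
    (hfY.mul ((hfX.pow 2).const_add 1)) X Y).symm

/-- For a `C²` function `f : ℝ² → ℝ` and unit vectors `X`, `Y`,
setting `u := f_X (1 + f_Y²)` and `v := f_Y (1 + f_X²)`, the expression
`f_{XX}(1 + f_Y²) − f_{YY}(1 + f_X²)` equals the divergence of the vector field
`(uX¹ − vY¹, uX² − vY²)`. -/
theorem curvature_difference_eq_divergence
    (f : ℝ × ℝ → ℝ) (hf : ContDiff ℝ 2 f) (X Y : ℝ × ℝ)
    (hX : X.1 ^ 2 + X.2 ^ 2 = 1) (hY : Y.1 ^ 2 + Y.2 ^ 2 = 1) (p : ℝ × ℝ) :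
    fderiv ℝ (fun q => fderiv ℝ f q X) p X * (1 + (fderiv ℝ f p Y) ^ 2)
      - fderiv ℝ (fun q => fderiv ℝ f q Y) p Y * (1 + (fderiv ℝ f p X) ^ 2)
    = fderiv ℝ (fun q =>
          (fderiv ℝ f q X * (1 + (fderiv ℝ f q Y) ^ 2)) * X.1
            - (fderiv ℝ f q Y * (1 + (fderiv ℝ f q X) ^ 2)) * Y.1) p (1, 0)
      + fderiv ℝ (fun q =>
          (fderiv ℝ f q X * (1 + (fderiv ℝ f q Y) ^ 2)) * X.2
            - (fderiv ℝ f q Y * (1 + (fderiv ℝ f q X) ^ 2)) * Y.2) p (0, 1) :=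
  curvature_difference_eq_divergence_general f hf X Y p
end

section
/- Let f : ℝ² → ℝ be a C² function whose gradient decays uniformly faster than 1/r, i.e., r·‖∇f(r,θ)‖ → 0 uniformly in θ as r → ∞. For unit vectors X, Y ∈ S¹ define the normal curvature k(p,X) := f_{XX}(p) / ((1 + f_X(p)²)·√(1 + ‖∇f(p)‖²)). Then lim_{r→∞} ∫_{B_r} (k(p,X) − k(p,Y))·(1 + f_X(p)²)·(1 + f_Y(p)²) dA_p = 0, where dA_p = √(1 + ‖∇f(p)‖²) dx dy. -/
/-!
With `g_{XY} := f_X (1 + f_Y²)`, the integrand equals `∂_X g_{XY} - ∂_Y g_{YX}`: the mixed terms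
`2 f_X f_Y f_{XY}` cancel by symmetry of the Hessian. Since `ℝ × ℝ` carries the sup norm,
`closedBall 0 r` is the square `[-r, r]²`, and the divergence theorem bounds the integral of a
directional derivative over it by the perimeter `8 r` times the maximum of `|g|` on the boundary.
There `|g_{XY}| ≤ 2 ‖∇f‖ = o(1/r)`, so both integrals tend to `0`.
-/

open MeasureTheory Filter Real

/-- The normal curvature of the graph of `f` above `p` in the direction `X`:
`k(p,X) = f_{XX} / ((1 + f_X²) √(1 + ‖∇f‖²))`, where `‖∇f‖² = f₁² + f₂²`. -/
noncomputable def normalCurv (f : ℝ × ℝ → ℝ) (p X : ℝ × ℝ) : ℝ :=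
  fderiv ℝ (fun q => fderiv ℝ f q X) p X /
    ((1 + (fderiv ℝ f p X) ^ 2) *
      Real.sqrt (1 + ((fderiv ℝ f p (1, 0)) ^ 2 + (fderiv ℝ f p (0, 1)) ^ 2)))

lemma ContinuousLinearMap.apply_eq_fst_smul_add_snd_smul {E : Type*} [NormedAddCommGroup E]
    [NormedSpace ℝ E] (T : ℝ × ℝ →L[ℝ] E) (X : ℝ × ℝ) :
    T X = X.1 • T (1, 0) + X.2 • T (0, 1) := by
  rw [← map_smul, ← map_smul, ← map_add]
  congr 1
  ext <;> simp

lemma ContinuousLinearMap.abs_apply_le_sqrt (T : ℝ × ℝ →L[ℝ] ℝ) {X : ℝ × ℝ}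
    (hX : X.1 ^ 2 + X.2 ^ 2 = 1) : |T X| ≤ √(T (1, 0) ^ 2 + T (0, 1) ^ 2) := by
  rw [T.apply_eq_fst_smul_add_snd_smul, smul_eq_mul, smul_eq_mul]
  refine Real.abs_le_sqrt ?_
  nlinarith [sq_nonneg (X.1 * T (0, 1) - X.2 * T (1, 0))]

lemma Prod.norm_le_one_of_sq_add_sq_eq_one {X : ℝ × ℝ} (hX : X.1 ^ 2 + X.2 ^ 2 = 1) :
    ‖X‖ ≤ 1 := by
  rw [Prod.norm_def, Real.norm_eq_abs, Real.norm_eq_abs]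
  exact max_le ((sq_le_one_iff_abs_le_one _).1 (by nlinarith))
    ((sq_le_one_iff_abs_le_one _).1 (by nlinarith))

section FluxBound

variable {E : Type*} [NormedAddCommGroup E] [NormedSpace ℝ E]

lemma Prod.closedBall_zero_eq_Icc (r : ℝ) :
    Metric.closedBall (0 : ℝ × ℝ) r = Set.Icc (-r, -r) (r, r) := by
  rw [show (0 : ℝ × ℝ) = (0, 0) from rfl, ← closedBall_prod_same, Real.closedBall_eq_Icc,
    Set.Icc_prod_Icc, zero_sub, zero_add]

lemma norm_intervalIntegral_smul_le {φ : ℝ → E} (a : ℝ) {r C : ℝ} (hr : 0 ≤ r)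
    (hφ : ∀ x, |x| ≤ r → ‖φ x‖ ≤ C) :
    ‖∫ x in -r..r, a • φ x‖ ≤ |a| * C * (2 * r) := by
  have h := intervalIntegral.norm_integral_le_of_norm_le_const (a := -r) (b := r)
    (C := |a| * C) (f := fun x => a • φ x) fun x hx => by
      rw [Set.uIoc_of_le (by linarith)] at hx
      rw [norm_smul, Real.norm_eq_abs]
      exact mul_le_mul_of_nonneg_left (hφ x (abs_le.2 ⟨hx.1.le, hx.2⟩)) (abs_nonneg a)
  rwa [show |r - -r| = 2 * r by rw [abs_of_nonneg (by linarith)]; ring] at h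

theorem norm_integral_fderiv_apply_closedBall_le [CompleteSpace E] {g : ℝ × ℝ → E}
    (hg : ContDiff ℝ 1 g) (X : ℝ × ℝ) {r C : ℝ} (hr : 0 ≤ r) (hC : ∀ p, ‖p‖ = r → ‖g p‖ ≤ C) :
    ‖∫ p in Metric.closedBall 0 r, fderiv ℝ g p X‖ ≤ 8 * r * ‖X‖ * C := by
  have hdiff : ∀ p, HasFDerivAt g (fderiv ℝ g p) p := fun p =>
    (hg.differentiable one_ne_zero p).hasFDerivAt
  have hdir : ∀ p, fderiv ℝ g p X = X.1 • fderiv ℝ g p (1, 0) + X.2 • fderiv ℝ g p (0, 1) :=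
    fun p => (fderiv ℝ g p).apply_eq_fst_smul_add_snd_smul X
  have hint : IntegrableOn (fun p => X.1 • fderiv ℝ g p (1, 0) + X.2 • fderiv ℝ g p (0, 1))
      (Set.Icc (-r, -r) (r, r)) := by
    simp_rw [← hdir]
    exact ((hg.continuous_fderiv one_ne_zero).clm_apply continuous_const).integrableOn_Icc
  have hboundary : ∀ s, |s| = r → ∀ x, |x| ≤ r → ‖g (x, s)‖ ≤ C ∧ ‖g (s, x)‖ ≤ C :=
    fun s hs x hx => ⟨hC _ (by simp [hs, hx]), hC _ (by simp [hs, hx])⟩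
  have hrr : |r| = r := abs_of_nonneg hr
  have hnr : |-r| = r := by rw [abs_neg, hrr]
  have hC0 : 0 ≤ C := (norm_nonneg _).trans (hC (r, r) (by simp [hrr]))
  have hdivergence := integral_divergence_prod_Icc_of_hasFDerivAt_off_countable_of_le
    (fun p => X.1 • g p) (fun p => X.2 • g p) (fun p => X.1 • fderiv ℝ g p)
    (fun p => X.2 • fderiv ℝ g p) _ _
    (Prod.mk_le_mk.2 ⟨by linarith, by linarith⟩) ∅ Set.countable_empty
    (continuous_const.smul hg.continuous).continuousOn
    (continuous_const.smul hg.continuous).continuousOn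
    (fun p _ => (hdiff p).const_smul X.1) (fun p _ => (hdiff p).const_smul X.2) hint
  simp_rw [Prod.closedBall_zero_eq_Icc, hdir]
  simp only [smul_apply] at hdivergence
  rw [hdivergence]
  have top := norm_intervalIntegral_smul_le X.2 hr fun x hx => (hboundary r hrr x hx).1
  have bot := norm_intervalIntegral_smul_le X.2 hr fun x hx => (hboundary (-r) hnr x hx).1
  have right := norm_intervalIntegral_smul_le X.1 hr fun x hx => (hboundary r hrr x hx).2
  have left := norm_intervalIntegral_smul_le X.1 hr fun x hx => (hboundary (-r) hnr x hx).2
  have h1 : |X.1| ≤ ‖X‖ := norm_fst_le X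
  have h2 : |X.2| ≤ ‖X‖ := norm_snd_le X
  calc _ ≤ _ := norm_sub_le_of_le (norm_add_le_of_le (norm_sub_le_of_le top bot) right) left
    _ ≤ 8 * r * ‖X‖ * C := by nlinarith [mul_nonneg hC0 hr]

end FluxBound

lemma exists_norm_mul_le_of_polar_decay {G : ℝ × ℝ → ℝ} (hG : ∀ q, 0 ≤ G q)
    (hdecay : ∀ ε > 0, ∃ R : ℝ, ∀ r ≥ R, ∀ θ : ℝ, r * G (r * cos θ, r * sin θ) < ε)
    {ε : ℝ} (hε : 0 < ε) : ∃ R, ∀ q : ℝ × ℝ, R ≤ ‖q‖ → ‖q‖ * G q ≤ ε := by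
  obtain ⟨R, hR⟩ := hdecay ε hε
  refine ⟨R, fun q hq => ?_⟩
  let z : ℂ := ⟨q.1, q.2⟩
  have hqz : ‖q‖ ≤ ‖z‖ := max_le (Complex.abs_re_le_norm z) (Complex.abs_im_le_norm z)
  have hpolar : (‖z‖ * cos (Complex.arg z), ‖z‖ * sin (Complex.arg z)) = q := by
    rw [Complex.norm_mul_cos_arg, Complex.norm_mul_sin_arg]
  have h := hR ‖z‖ (hq.trans hqz) (Complex.arg z)
  rw [hpolar] at h
  exact (mul_le_mul_of_nonneg_right hqz (hG q)).trans h.le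

-- Euclidean length of `∇f`; the operator norm of `fderiv ℝ f p` would be the `ℓ¹` norm, dual to
-- the sup norm of `ℝ × ℝ`.
noncomputable def gradNorm (f : ℝ × ℝ → ℝ) (p : ℝ × ℝ) : ℝ :=
  √(fderiv ℝ f p (1, 0) ^ 2 + fderiv ℝ f p (0, 1) ^ 2)

lemma gradNorm_nonneg (f : ℝ × ℝ → ℝ) (p : ℝ × ℝ) : 0 ≤ gradNorm f p := Real.sqrt_nonneg _

noncomputable def fluxPotential (f : ℝ × ℝ → ℝ) (X Y p : ℝ × ℝ) : ℝ :=
  fderiv ℝ f p X * (1 + fderiv ℝ f p Y ^ 2)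

lemma abs_fluxPotential_le (f : ℝ × ℝ → ℝ) {X Y : ℝ × ℝ} (hX : X.1 ^ 2 + X.2 ^ 2 = 1)
    (hY : Y.1 ^ 2 + Y.2 ^ 2 = 1) (p : ℝ × ℝ) :
    |fluxPotential f X Y p| ≤ gradNorm f p * (1 + gradNorm f p ^ 2) := by
  have hfX := (fderiv ℝ f p).abs_apply_le_sqrt hX
  have hfY := (fderiv ℝ f p).abs_apply_le_sqrt hY
  rw [fluxPotential, abs_mul, abs_of_pos (by positivity : (0 : ℝ) < 1 + fderiv ℝ f p Y ^ 2)]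
  exact mul_le_mul hfX (add_le_add_right (sq_le_sq.2 (hfY.trans (le_abs_self _))) 1)
    (by positivity) (Real.sqrt_nonneg _)

lemma exists_norm_mul_abs_fluxPotential_le {f : ℝ × ℝ → ℝ}
    (hdecay : ∀ ε > 0, ∃ R : ℝ, ∀ r ≥ R, ∀ θ : ℝ, r * gradNorm f (r * cos θ, r * sin θ) < ε)
    {X Y : ℝ × ℝ} (hX : X.1 ^ 2 + X.2 ^ 2 = 1) (hY : Y.1 ^ 2 + Y.2 ^ 2 = 1) {ε : ℝ}
    (hε : 0 < ε) : ∃ R, ∀ q : ℝ × ℝ, R ≤ ‖q‖ → ‖q‖ * |fluxPotential f X Y q| ≤ ε := by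
  obtain ⟨R, hR⟩ := exists_norm_mul_le_of_polar_decay (gradNorm_nonneg f) hdecay
    (lt_min (half_pos hε) one_pos)
  refine ⟨max R 1, fun q hq => ?_⟩
  have hqG := hR q (le_of_max_le_left hq)
  have hq1 : 1 ≤ ‖q‖ := le_of_max_le_right hq
  have hG0 := gradNorm_nonneg f q
  have hG1 : gradNorm f q ≤ 1 := by nlinarith [min_le_right (ε / 2) 1]
  calc ‖q‖ * |fluxPotential f X Y q| ≤ ‖q‖ * gradNorm f q * (1 + gradNorm f q ^ 2) := by
        rw [mul_assoc]
        exact mul_le_mul_of_nonneg_left (abs_fluxPotential_le f hX hY q) (norm_nonneg q)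
    _ ≤ ε / 2 * 2 := by
        gcongr
        · exact hqG.trans (min_le_left _ _)
        · nlinarith
    _ = ε := by ring

lemma hasFDerivAt_fderiv_apply {E F : Type*} [NormedAddCommGroup E] [NormedSpace ℝ E]
    [NormedAddCommGroup F] [NormedSpace ℝ F] {f : E → F} (hf : ContDiff ℝ 2 f) (X p : E) :
    HasFDerivAt (fun q => fderiv ℝ f q X) ((fderiv ℝ (fderiv ℝ f) p).flip X) p := by
  have hF : ContDiff ℝ 1 (fderiv ℝ f) := hf.fderiv_right (by norm_num)
  simpa using ((hF.differentiable one_ne_zero p).hasFDerivAt).clm_apply (hasFDerivAt_const X p)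

lemma contDiff_fluxPotential {f : ℝ × ℝ → ℝ} (hf : ContDiff ℝ 2 f) (X Y : ℝ × ℝ) :
    ContDiff ℝ 1 (fluxPotential f X Y) := by
  have hF : ContDiff ℝ 1 (fderiv ℝ f) := hf.fderiv_right (by norm_num)
  exact (hF.clm_apply contDiff_const).mul
    (contDiff_const.add ((hF.clm_apply contDiff_const).pow 2))

lemma fderiv_fluxPotential_apply {f : ℝ × ℝ → ℝ} (hf : ContDiff ℝ 2 f) (X Y p V : ℝ × ℝ) :
    fderiv ℝ (fluxPotential f X Y) p V =
      fderiv ℝ (fderiv ℝ f) p V X * (1 + fderiv ℝ f p Y ^ 2) +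
        fderiv ℝ f p X * (2 * fderiv ℝ f p Y * fderiv ℝ (fderiv ℝ f) p V Y) := by
  have h : HasFDerivAt (fluxPotential f X Y) _ p := (hasFDerivAt_fderiv_apply hf X p).mul
    (((hasFDerivAt_fderiv_apply hf Y p).pow 2).const_add 1)
  rw [h.fderiv]
  simp only [Nat.add_one_sub_one, pow_one, nsmul_eq_mul, Nat.cast_ofNat, add_apply, smul_apply,
    ContinuousLinearMap.flip_apply, smul_eq_mul]
  ring

lemma integrand_eq_fderiv_fluxPotential_sub {f : ℝ × ℝ → ℝ} (hf : ContDiff ℝ 2 f)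
    (X Y p : ℝ × ℝ) :
    (normalCurv f p X - normalCurv f p Y) *
        (1 + (fderiv ℝ f p X) ^ 2) * (1 + (fderiv ℝ f p Y) ^ 2) *
        Real.sqrt (1 + ((fderiv ℝ f p (1, 0)) ^ 2 + (fderiv ℝ f p (0, 1)) ^ 2)) =
      fderiv ℝ (fluxPotential f X Y) p X - fderiv ℝ (fluxPotential f Y X) p Y := by
  have hsymm := (hf.contDiffAt (x := p)).isSymmSndFDerivAt (by simp) X Y
  have hs : 0 < Real.sqrt (1 + ((fderiv ℝ f p (1, 0)) ^ 2 + (fderiv ℝ f p (0, 1)) ^ 2)) :=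
    Real.sqrt_pos.2 (by positivity)
  rw [normalCurv, normalCurv, (hasFDerivAt_fderiv_apply hf X p).fderiv,
    (hasFDerivAt_fderiv_apply hf Y p).fderiv, fderiv_fluxPotential_apply hf,
    fderiv_fluxPotential_apply hf, ContinuousLinearMap.flip_apply, ContinuousLinearMap.flip_apply,
    hsymm]
  field_simp
  ring

lemma tendsto_integral_fderiv_fluxPotential {f : ℝ × ℝ → ℝ} (hf : ContDiff ℝ 2 f)
    (hdecay : ∀ ε > 0, ∃ R : ℝ, ∀ r ≥ R, ∀ θ : ℝ, r * gradNorm f (r * cos θ, r * sin θ) < ε)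
    {X Y : ℝ × ℝ} (hX : X.1 ^ 2 + X.2 ^ 2 = 1) (hY : Y.1 ^ 2 + Y.2 ^ 2 = 1) :
    Tendsto (fun r : ℝ => ∫ p in Metric.closedBall (0 : ℝ × ℝ) r,
      fderiv ℝ (fluxPotential f X Y) p X) atTop (nhds 0) := by
  rw [Metric.tendsto_atTop]
  intro ε hε
  obtain ⟨R, hR⟩ :=
    exists_norm_mul_abs_fluxPotential_le hdecay hX hY (by positivity : 0 < ε / 16)
  refine ⟨max R 1, fun r hr => ?_⟩
  have hr0 : 0 < r := lt_of_lt_of_le one_pos (le_of_max_le_right hr)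
  have hC : ∀ p : ℝ × ℝ, ‖p‖ = r → ‖fluxPotential f X Y p‖ ≤ ε / 16 / r := fun p hp => by
    rw [le_div_iff₀ hr0, Real.norm_eq_abs, mul_comm, ← hp]
    exact hR p (hp ▸ le_of_max_le_left hr)
  have hbound := norm_integral_fderiv_apply_closedBall_le (contDiff_fluxPotential hf X Y) X
    hr0.le hC
  rw [dist_zero_right]
  calc _ ≤ 8 * r * ‖X‖ * (ε / 16 / r) := hbound
    _ ≤ 8 * r * 1 * (ε / 16 / r) := by gcongr; exact Prod.norm_le_one_of_sq_add_sq_eq_one hX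
    _ < ε := by field_simp; linarith

/-- If the gradient of the `C²` function `f : ℝ² → ℝ` decays uniformly
faster than `1/r`, then for all unit `X`, `Y`,
`∫_{B_r} (k(·,X) − k(·,Y))(1 + f_X²)(1 + f_Y²) dA → 0` as `r → ∞`, where
`dA = √(1 + ‖∇f‖²) dx dy`. -/
theorem integral_curvature_difference_tendsto_zero
    (f : ℝ × ℝ → ℝ) (hf : ContDiff ℝ 2 f)
    (hdecay : ∀ ε > 0, ∃ R : ℝ, ∀ r ≥ R, ∀ θ : ℝ,
      r * Real.sqrt ((fderiv ℝ f (r * Real.cos θ, r * Real.sin θ) (1, 0)) ^ 2 +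
        (fderiv ℝ f (r * Real.cos θ, r * Real.sin θ) (0, 1)) ^ 2) < ε)
    (X Y : ℝ × ℝ) (hX : X.1 ^ 2 + X.2 ^ 2 = 1) (hY : Y.1 ^ 2 + Y.2 ^ 2 = 1) :
    Tendsto (fun r : ℝ => ∫ p in Metric.closedBall (0 : ℝ × ℝ) r,
        (normalCurv f p X - normalCurv f p Y) *
          (1 + (fderiv ℝ f p X) ^ 2) * (1 + (fderiv ℝ f p Y) ^ 2) *
          Real.sqrt (1 + ((fderiv ℝ f p (1, 0)) ^ 2 + (fderiv ℝ f p (0, 1)) ^ 2)))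
      atTop (nhds 0) := by
  have hint : ∀ U V : ℝ × ℝ, ∀ r : ℝ,
      IntegrableOn (fun p => fderiv ℝ (fluxPotential f U V) p U) (Metric.closedBall 0 r) :=
    fun U V r =>
    (((contDiff_fluxPotential hf U V).continuous_fderiv one_ne_zero).clm_apply
      continuous_const).continuousOn.integrableOn_compact (isCompact_closedBall 0 r)
  simp_rw [integrand_eq_fderiv_fluxPotential_sub hf X Y, integral_sub (hint X Y _) (hint Y X _)]
  simpa using (tendsto_integral_fderiv_fluxPotential hf hdecay hX hY).sub
    (tendsto_integral_fderiv_fluxPotential hf hdecay hY hX)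
end

section
/- For all λ > 0, the graph of f(x,y) = 1 + λ(x+y²)/√(1+(x+y²)²) has no umbilical points; that is, the system (1+f₁²)f₁₂ − f₁f₂f₁₁ = 0 and (1+f₁²)f₂₂ − (1+f₂²)f₁₁ = 0 has no simultaneous solution (x,y) ∈ ℝ². -/
/-! With `u = x + y²` and `f = φ ∘ u`, the partials of `f` at `p` are `f₁ = φ'`, `f₂ = 2yφ'`,
`f₁₁ = φ''`, `f₁₂ = 2yφ''` and `f₂₂ = 2φ' + 4y²φ''`, evaluated at `u p`, so the umbilic system
collapses to `yφ'' = 0` and `2φ'(1 + φ'²) + (4y² - 1)φ'' = 0`. If `φ'' = 0` this forces `φ' = 0`;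
if `y = 0` it forces `φ'' = 2φ'(1 + φ'²)`. For `φ(t) = 1 + λt/√(1+t²)` we have
`φ' = λ/√(1+t²)³ > 0` and `φ''·(1+t²) = -3tφ'`, and `-3t < 2(1+t²)` excludes both cases. -/

open ContinuousLinearMap

def IsGraphUmbilic (f : ℝ × ℝ → ℝ) (p : ℝ × ℝ) : Prop :=
  (1 + (fderiv ℝ f p (1, 0)) ^ 2) * fderiv ℝ (fun q => fderiv ℝ f q (0, 1)) p (1, 0)
      - fderiv ℝ f p (1, 0) * fderiv ℝ f p (0, 1) *
          fderiv ℝ (fun q => fderiv ℝ f q (1, 0)) p (1, 0) = 0 ∧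
    (1 + (fderiv ℝ f p (1, 0)) ^ 2) * fderiv ℝ (fun q => fderiv ℝ f q (0, 1)) p (0, 1)
      - (1 + (fderiv ℝ f p (0, 1)) ^ 2) *
          fderiv ℝ (fun q => fderiv ℝ f q (1, 0)) p (1, 0) = 0

section AddSq

variable {φ φ' φ'' : ℝ → ℝ} {d : ℝ} {q : ℝ × ℝ}

theorem hasFDerivAt_comp_add_sq (h : HasDerivAt φ d (q.1 + q.2 ^ 2)) :
    HasFDerivAt (fun w : ℝ × ℝ => φ (w.1 + w.2 ^ 2))
      (d • (fst ℝ ℝ ℝ + (2 * q.2) • snd ℝ ℝ ℝ)) q := by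
  have hu : HasFDerivAt (fun w : ℝ × ℝ => w.1 + w.2 ^ 2) (fst ℝ ℝ ℝ + (2 * q.2) • snd ℝ ℝ ℝ) q := by
    refine ((hasFDerivAt_fst (p := q)).add ((hasFDerivAt_snd (p := q)).pow 2)).congr_fderiv ?_
    simp
  exact h.comp_hasFDerivAt q hu

theorem fderiv_comp_add_sq_apply (h : HasDerivAt φ d (q.1 + q.2 ^ 2)) (v : ℝ × ℝ) :
    fderiv ℝ (fun w : ℝ × ℝ => φ (w.1 + w.2 ^ 2)) q v = d * (v.1 + 2 * q.2 * v.2) := by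
  simp only [(hasFDerivAt_comp_add_sq h).fderiv, add_apply, smul_apply, coe_fst', coe_snd',
    smul_eq_mul]

theorem fderiv_comp_add_sq_apply_fst (hφ : ∀ t, HasDerivAt φ (φ' t) t) :
    (fun q => fderiv ℝ (fun w : ℝ × ℝ => φ (w.1 + w.2 ^ 2)) q (1, 0)) =
      fun q => φ' (q.1 + q.2 ^ 2) := by
  funext q
  rw [fderiv_comp_add_sq_apply (hφ _)]
  ring

theorem fderiv_comp_add_sq_apply_snd (hφ : ∀ t, HasDerivAt φ (φ' t) t) :
    (fun q => fderiv ℝ (fun w : ℝ × ℝ => φ (w.1 + w.2 ^ 2)) q (0, 1)) =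
      fun q => 2 * q.2 * φ' (q.1 + q.2 ^ 2) := by
  funext q
  rw [fderiv_comp_add_sq_apply (hφ _)]
  ring

theorem fderiv_snd_mul_comp_add_sq_apply (h : HasDerivAt φ d (q.1 + q.2 ^ 2)) (v : ℝ × ℝ) :
    fderiv ℝ (fun w : ℝ × ℝ => 2 * w.2 * φ (w.1 + w.2 ^ 2)) q v =
      2 * v.2 * φ (q.1 + q.2 ^ 2) + 2 * q.2 * (d * (v.1 + 2 * q.2 * v.2)) := by
  have h2 : HasFDerivAt (fun w : ℝ × ℝ => 2 * w.2) ((2 : ℝ) • snd ℝ ℝ ℝ) q :=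
    (hasFDerivAt_snd (p := q)).const_mul 2
  rw [(h2.fun_mul (hasFDerivAt_comp_add_sq h)).fderiv]
  simp only [smul_add, add_apply, smul_apply, coe_fst', coe_snd', smul_eq_mul]
  ring

theorem isGraphUmbilic_comp_add_sq_iff (hφ : ∀ t, HasDerivAt φ (φ' t) t)
    (hφ' : ∀ t, HasDerivAt φ' (φ'' t) t) (p : ℝ × ℝ) :
    IsGraphUmbilic (fun w => φ (w.1 + w.2 ^ 2)) p ↔
      p.2 * φ'' (p.1 + p.2 ^ 2) = 0 ∧
        2 * φ' (p.1 + p.2 ^ 2) * (1 + φ' (p.1 + p.2 ^ 2) ^ 2)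
          + (4 * p.2 ^ 2 - 1) * φ'' (p.1 + p.2 ^ 2) = 0 := by
  rw [IsGraphUmbilic, fderiv_comp_add_sq_apply_fst hφ, fderiv_comp_add_sq_apply_snd hφ,
    fderiv_comp_add_sq_apply (hφ _), fderiv_comp_add_sq_apply (hφ _),
    fderiv_comp_add_sq_apply (hφ' _), fderiv_snd_mul_comp_add_sq_apply (hφ' _),
    fderiv_snd_mul_comp_add_sq_apply (hφ' _)]
  dsimp only
  constructor
  · rintro ⟨h₁, h₂⟩
    exact ⟨by linear_combination h₁ / 2, by linear_combination h₂⟩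
  · rintro ⟨h₁, h₂⟩
    exact ⟨by linear_combination 2 * h₁, by linear_combination h₂⟩

theorem not_isGraphUmbilic_comp_add_sq (hφ : ∀ t, HasDerivAt φ (φ' t) t)
    (hφ' : ∀ t, HasDerivAt φ' (φ'' t) t) {p : ℝ × ℝ} (hne : φ' (p.1 + p.2 ^ 2) ≠ 0)
    (hlt : φ'' (p.1 + p.2 ^ 2) < 2 * φ' (p.1 + p.2 ^ 2) * (1 + φ' (p.1 + p.2 ^ 2) ^ 2)) :
    ¬ IsGraphUmbilic (fun w => φ (w.1 + w.2 ^ 2)) p := by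
  rw [isGraphUmbilic_comp_add_sq_iff hφ hφ']
  generalize p.1 + p.2 ^ 2 = t at *
  rintro ⟨h₁, h₂⟩
  rcases mul_eq_zero.1 h₁ with hy | hC
  · rw [hy] at h₂
    linarith
  · rw [hC] at h₂
    have h₃ : φ' t * (2 * (1 + φ' t ^ 2)) = 0 := by linear_combination h₂
    exact mul_ne_zero hne (by positivity) h₃

end AddSq

theorem hasDerivAt_sqrt_one_add_sq (t : ℝ) :
    HasDerivAt (fun t => √(1 + t ^ 2)) (t / √(1 + t ^ 2)) t := by
  have h := ((hasDerivAt_pow 2 t).const_add 1).sqrt (by positivity)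
  convert h using 1
  norm_num
  field_simp

theorem hasDerivAt_mul_div_sqrt_one_add_sq (c t : ℝ) :
    HasDerivAt (fun t => c * t / √(1 + t ^ 2)) (c / √(1 + t ^ 2) ^ 3) t := by
  have hs : √(1 + t ^ 2) ^ 2 = 1 + t ^ 2 := Real.sq_sqrt (by positivity)
  have h := ((hasDerivAt_id t).const_mul c).div (hasDerivAt_sqrt_one_add_sq t) (by positivity)
  refine h.congr_deriv ?_
  field_simp
  simp only [id]
  linear_combination c * hs

theorem hasDerivAt_div_sqrt_one_add_sq_pow_three (c t : ℝ) :
    HasDerivAt (fun t => c / √(1 + t ^ 2) ^ 3) (-(3 * c * t) / √(1 + t ^ 2) ^ 5) t := by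
  have h := (hasDerivAt_const t c).div ((hasDerivAt_sqrt_one_add_sq t).pow 3)
    (pow_pos (Real.sqrt_pos.2 (by positivity)) 3).ne'
  refine h.congr_deriv ?_
  simp only [Pi.pow_apply]
  field_simp
  ring

theorem neg_three_mul_div_sqrt_pow_five_lt {c : ℝ} (hc : 0 < c) (t : ℝ) :
    -(3 * c * t) / √(1 + t ^ 2) ^ 5 <
      2 * (c / √(1 + t ^ 2) ^ 3) * (1 + (c / √(1 + t ^ 2) ^ 3) ^ 2) := by
  set s := √(1 + t ^ 2)
  have hs : s ^ 2 = 1 + t ^ 2 := Real.sq_sqrt (by positivity)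
  have ha : 0 < c / s ^ 3 := by positivity
  calc -(3 * c * t) / s ^ 5 = c / s ^ 3 * (-(3 * t) / s ^ 2) := by field_simp
    _ < c / s ^ 3 * 2 := by
        gcongr
        rw [div_lt_iff₀ (by positivity)]
        nlinarith [sq_nonneg (4 * t + 3)]
    _ ≤ 2 * (c / s ^ 3) * (1 + (c / s ^ 3) ^ 2) := by nlinarith [sq_nonneg (c / s ^ 3)]

/-- For all `λ > 0`, the graph of
`f(x,y) = 1 + λ(x+y²)/√(1+(x+y²)²)` has no umbilical points: the system
`(1+f₁²)f₁₂ − f₁f₂f₁₁ = 0` and `(1+f₁²)f₂₂ − (1+f₂²)f₁₁ = 0` has no solution. -/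
theorem bounded_graph_umbilic_free (l : ℝ) (hl : 0 < l) :
    ¬ ∃ p : ℝ × ℝ,
      ((fun f : ℝ × ℝ → ℝ =>
        (1 + (fderiv ℝ f p (1, 0)) ^ 2) * fderiv ℝ (fun q => fderiv ℝ f q (0, 1)) p (1, 0)
          - fderiv ℝ f p (1, 0) * fderiv ℝ f p (0, 1) *
              fderiv ℝ (fun q => fderiv ℝ f q (1, 0)) p (1, 0) = 0 ∧
        (1 + (fderiv ℝ f p (1, 0)) ^ 2) * fderiv ℝ (fun q => fderiv ℝ f q (0, 1)) p (0, 1)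
          - (1 + (fderiv ℝ f p (0, 1)) ^ 2) *
              fderiv ℝ (fun q => fderiv ℝ f q (1, 0)) p (1, 0) = 0)
        (fun w : ℝ × ℝ =>
          1 + l * (w.1 + w.2 ^ 2) / Real.sqrt (1 + (w.1 + w.2 ^ 2) ^ 2))) := by
  rintro ⟨p, hp⟩
  exact not_isGraphUmbilic_comp_add_sq (φ := fun t => 1 + l * t / √(1 + t ^ 2))
    (fun t => (hasDerivAt_mul_div_sqrt_one_add_sq l t).const_add 1)
    (hasDerivAt_div_sqrt_one_add_sq_pow_three l) (by positivity)
    (neg_three_mul_div_sqrt_pow_five_lt hl _) hp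
end
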